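/- arXiv:1011.1539 — 5 statements merged into one kernel-verified Lean document; each statement's English description precedes it below -/
import Mathlib

section
/- Let p be a prime, n an integer coprime to p, and k ≥ 1. Then the multiplicative order of n modulo p^k equals j with j dividing p−1 if and only if the multiplicative order of n modulo p^ℓ equals j for every 1 ≤ ℓ ≤ k. -/
/-!
Reduction `ZMod (p ^ k) → ZMod (p ^ ℓ)` shows that the order modulo `p ^ ℓ` divides the order
modulo `p ^ k`. Conversely, if `a ≡ b [p ^ ℓ]` with `ℓ ≥ 1` then `a ^ p ≡ b ^ p [p ^ (ℓ + 1)]`,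
so the order modulo `p ^ k` divides `p ^ (k - ℓ)` times the order modulo `p ^ ℓ`. An order
dividing `p - 1` is prime to `p`, hence the two orders agree. The order modulo `p` always divides
`p - 1` by Fermat's little theorem.
-/

theorem pow_succ_dvd_pow_sub_pow_of_pow_dvd_sub {R : Type*} [CommRing R] {p ℓ : ℕ} {a b : R}
    (hℓ : ℓ ≠ 0) (h : (p : R) ^ ℓ ∣ a - b) : (p : R) ^ (ℓ + 1) ∣ a ^ p - b ^ p := by
  have hp : (p : R) ∣ a - b := (dvd_pow_self _ hℓ).trans h
  rw [pow_succ', ← geom_sum₂_mul]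
  exact mul_dvd_mul (dvd_geom_sum₂_self hp) h

theorem pow_add_dvd_pow_pow_sub_pow_pow_of_pow_dvd_sub {R : Type*} [CommRing R] {p ℓ : ℕ}
    {a b : R} (hℓ : ℓ ≠ 0) (h : (p : R) ^ ℓ ∣ a - b) (t : ℕ) :
    (p : R) ^ (ℓ + t) ∣ a ^ p ^ t - b ^ p ^ t := by
  induction t with
  | zero => simpa using h
  | succ t ih =>
    rw [← add_assoc, pow_succ p t, pow_mul, pow_mul]
    exact pow_succ_dvd_pow_sub_pow_of_pow_dvd_sub (by omega) ih

theorem orderOf_intCast_zmod_pow_add_dvd {p ℓ : ℕ} (hℓ : ℓ ≠ 0) (a : ℤ) (t : ℕ) :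
    orderOf (a : ZMod (p ^ (ℓ + t))) ∣ p ^ t * orderOf (a : ZMod (p ^ ℓ)) := by
  set m := orderOf (a : ZMod (p ^ ℓ))
  have hm : (p : ℤ) ^ ℓ ∣ 1 - a ^ m := by
    have := pow_orderOf_eq_one (a : ZMod (p ^ ℓ))
    rw [← Int.cast_pow, ← Int.cast_one, ZMod.intCast_eq_intCast_iff_dvd_sub] at this
    exact_mod_cast this
  apply orderOf_dvd_of_pow_eq_one
  rw [mul_comm, pow_mul, ← Int.cast_pow, ← Int.cast_pow, ← Int.cast_one,
    ZMod.intCast_eq_intCast_iff_dvd_sub]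
  simpa using pow_add_dvd_pow_pow_sub_pow_pow_of_pow_dvd_sub hℓ hm t

theorem orderOf_natCast_zmod_dvd_of_dvd {m m' : ℕ} (h : m' ∣ m) (n : ℕ) :
    orderOf (n : ZMod m') ∣ orderOf (n : ZMod m) := by
  simpa using orderOf_map_dvd (ZMod.castHom h (ZMod m')).toMonoidHom (n : ZMod m)

theorem orderOf_natCast_zmod_prime_pow_eq_of_coprime {p k ℓ : ℕ} (n : ℕ) (hℓ : ℓ ≠ 0)
    (hℓk : ℓ ≤ k) (hcop : (orderOf (n : ZMod (p ^ k))).Coprime p) :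
    orderOf (n : ZMod (p ^ ℓ)) = orderOf (n : ZMod (p ^ k)) := by
  refine Nat.dvd_antisymm (orderOf_natCast_zmod_dvd_of_dvd (pow_dvd_pow p hℓk) n) ?_
  have hlift := orderOf_intCast_zmod_pow_add_dvd (p := p) hℓ n (k - ℓ)
  rw [Nat.add_sub_cancel' hℓk] at hlift
  push_cast at hlift
  exact (hcop.pow_right _).dvd_of_dvd_mul_left hlift

theorem stmt_2 (p n k j : ℕ) (hp : p.Prime) (hcop : n.Coprime p) (hk : 1 ≤ k) :
    (orderOf (n : ZMod (p ^ k)) = j ∧ j ∣ p - 1) ↔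
      ∀ ℓ, 1 ≤ ℓ → ℓ ≤ k → orderOf (n : ZMod (p ^ ℓ)) = j := by
  constructor
  · rintro ⟨rfl, hdvd⟩ ℓ hℓ hℓk
    have hpred : (p - 1).Coprime p :=
      (Nat.coprime_self_sub_left hp.one_le).mpr (Nat.coprime_one_left p)
    exact orderOf_natCast_zmod_prime_pow_eq_of_coprime n (by omega) hℓk
      (hpred.coprime_dvd_left hdvd)
  · intro h
    refine ⟨h k hk le_rfl, ?_⟩
    have := Fact.mk hp
    have hn : (n : ZMod p) ≠ 0 := by
      rw [Ne, ZMod.natCast_eq_zero_iff]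
      exact hp.coprime_iff_not_dvd.mp hcop.symm
    rw [← h 1 le_rfl hk, pow_one]
    exact ZMod.orderOf_dvd_card_sub_one hn
end

section
/- Let T be the Möbius permutation of F_q given by the matrix A = [[a,b],[c,d]] with c ≠ 0, ad − bc ≠ 0, and q odd. If the characteristic polynomial of A is irreducible over F_q and its roots α₁, α₂ ∈ F_{q²} satisfy (α₁/α₂)² = 1 with α₁ ≠ α₂ (equivalently, trace(A) = a + d = 0), then T is an involution of F_q with exactly one fixed point. -/
/-! When the trace vanishes, `T` is the Möbius map of a matrix `A` with `A² = (a² + bc) I`, a scalar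
matrix, so `T ∘ T = id`; the pole `a / c` is sent to itself. Any other fixed point `x` would satisfy
`(cx - a)² = a² + bc`, i.e. give a root of the characteristic polynomial `X² - (a² + bc)`, which
irreducibility forbids. -/

open Polynomial Function

section

variable {F : Type*} [Field F]

theorem pow_two_ne_of_irreducible_X_sq_sub_C {k : F} (h : Irreducible (X ^ 2 - C k)) (y : F) :
    y ^ 2 ≠ k :=
  pow_ne_of_irreducible_X_pow_sub_C h dvd_rfl (by norm_num) y

theorem mul_sub_ne_zero_of_ne_div {a c : F} (hc : c ≠ 0) {x : F} (hx : x ≠ a / c) :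
    c * x - a ≠ 0 := by
  rwa [sub_ne_zero, ne_eq, mul_comm, ← eq_div_iff hc]

variable [DecidableEq F]

def moebius (a b c d : F) (x : F) : F :=
  if x = -d / c then a / c else (a * x + b) / (c * x + d)

section TraceZero

variable {a b c : F}

theorem moebius_neg_apply_div : moebius a b c (-a) (a / c) = a / c := by
  simp [moebius]

theorem moebius_neg_apply_of_ne {x : F} (hx : x ≠ a / c) :
    moebius a b c (-a) x = (a * x + b) / (c * x - a) := by
  simp [moebius, hx, sub_eq_add_neg]

theorem moebius_neg_ne_div (hc : c ≠ 0) (hk : a * a + b * c ≠ 0) {x : F} (hx : x ≠ a / c) :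
    moebius a b c (-a) x ≠ a / c := by
  rw [moebius_neg_apply_of_ne hx, ne_eq, div_eq_div_iff (mul_sub_ne_zero_of_ne_div hc hx) hc]
  intro h
  exact hk (by linear_combination h)

theorem moebius_neg_involutive (hc : c ≠ 0) (hk : a * a + b * c ≠ 0) :
    Involutive (moebius a b c (-a)) := by
  intro x
  by_cases hx : x = a / c
  · rw [hx, moebius_neg_apply_div, moebius_neg_apply_div]
  have hTx := moebius_neg_ne_div hc hk hx
  have hTx_mul := div_mul_cancel₀ (a * x + b) (mul_sub_ne_zero_of_ne_div hc hx)
  rw [moebius_neg_apply_of_ne hTx, div_eq_iff (mul_sub_ne_zero_of_ne_div hc hTx),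
    moebius_neg_apply_of_ne hx]
  linear_combination -hTx_mul

theorem eq_div_of_isFixedPt_moebius_neg (hc : c ≠ 0) (hk : ∀ y : F, y ^ 2 ≠ a * a + b * c)
    {x : F} (hx : IsFixedPt (moebius a b c (-a)) x) : x = a / c := by
  by_contra hne
  rw [IsFixedPt, moebius_neg_apply_of_ne hne, div_eq_iff (mul_sub_ne_zero_of_ne_div hc hne)] at hx
  exact hk (c * x - a) (by linear_combination -c * hx)

end TraceZero

end

open Polynomial in
theorem stmt_11_general {F : Type*} [Field F] [DecidableEq F] (a b c d : F)
    (hc : c ≠ 0) (T : F → F)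
    (hT : ∀ x : F, T x = if x = -d / c then a / c else (a * x + b) / (c * x + d))
    (hirr : Irreducible (X ^ 2 - C (a + d) * X + C (a * d - b * c) : F[X]))
    (htr : a + d = 0) :
    T ∘ T = id ∧ ∃! x : F, T x = x := by
  obtain rfl : d = -a := by linear_combination htr
  obtain rfl : T = moebius a b c (-a) := funext hT
  have hchar :
      (X ^ 2 - C (a + -a) * X + C (a * -a - b * c) : F[X]) = X ^ 2 - C (a * a + b * c) := by
    simp only [add_neg_cancel, map_zero, zero_mul, sub_zero, map_sub, map_mul, map_neg, map_add]
    ring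
  have hns := pow_two_ne_of_irreducible_X_sq_sub_C (hchar ▸ hirr)
  have hk : a * a + b * c ≠ 0 := fun h => hns 0 (by rw [h]; ring)
  exact ⟨(moebius_neg_involutive hc hk).comp_self,
    a / c, moebius_neg_apply_div, fun _ hx => eq_div_of_isFixedPt_moebius_neg hc hns hx⟩

open Polynomial in
theorem stmt_11 {F : Type*} [Field F] [Fintype F] [DecidableEq F] (q : ℕ)
    (hq : Fintype.card F = q) (hodd : Odd q) (a b c d : F)
    (hc : c ≠ 0) (hdet : a * d - b * c ≠ 0) (T : F → F)
    (hT : ∀ x : F, T x = if x = -d / c then a / c else (a * x + b) / (c * x + d))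
    (hirr : Irreducible (X ^ 2 - C (a + d) * X + C (a * d - b * c) : F[X]))
    (htr : a + d = 0) :
    T ∘ T = id ∧ ∃! x : F, T x = x :=
  stmt_11_general a b c d hc T hT hirr htr
end

section
/- Let q be an odd prime power, a a non-square in F_q^*, and n, m positive integers with gcd(n, q+1) = 1 and n·m ≡ 1 (mod q+1). Then the Rédei function R_n(·, a) is a permutation of F_q and its compositional inverse is R_m(·, a), i.e., R_m(R_n(x, a), a) = x for all x ∈ F_q. -/
/-- The Rédei function `R_n(x, a) = G_n(x,a) / H_n(x,a)` over a field `F`, where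
`(x + √a)^n = G_n(x,a) + H_n(x,a)·√a`.  Equivalently, `G_n` and `H_n` are the
coefficients of `1` and `X` in `(C x + X)^n` reduced modulo `X^2 - C a`. -/
noncomputable def redeiFun {F : Type*} [Field F] (a : F) (n : ℕ) (x : F) : F :=
  ((Polynomial.C x + Polynomial.X) ^ n %ₘ (Polynomial.X ^ 2 - Polynomial.C a)).coeff 0 /
    ((Polynomial.C x + Polynomial.X) ^ n %ₘ (Polynomial.X ^ 2 - Polynomial.C a)).coeff 1

/-! In `K = F[X]/(X² - a) = F(√a)` put `u = x + √a`, so that `R_n(x) = G/H` where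
`u^n = G + H√a`. Euler's criterion gives `√a^q = -√a`, so the `q`-power Frobenius of `K` is
conjugation and `u^(q+1) = x² - a ∈ F^*`. If `H = 0`, both `u^n` and `u^(q+1)` lie in `F`, hence
so does `u` as `gcd(n, q+1) = 1`, which is absurd. So `u^n = H·(R_n(x) + √a)`, and writing
`nm = (q+1)k + 1` we get `(R_n(x) + √a)^m = u^(nm)/H^m = c·(x + √a)` with
`c = (x² - a)^k/H^m ∈ F^*`; comparing coordinates, `R_m(R_n(x)) = x`. -/

open Polynomial AdjoinRoot

theorem Subfield.mem_of_pow_mem_of_coprime {K : Type*} [DivisionRing K] (s : Subfield K) {u : K}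
    {m n : ℕ} (hmn : m.Coprime n) (hm : u ^ m ∈ s) (hn : u ^ n ∈ s) : u ∈ s := by
  rcases eq_or_ne u 0 with rfl | hu
  · exact s.zero_mem
  have bezout : u = (u ^ m) ^ m.gcdA n * (u ^ n) ^ m.gcdB n := by
    rw [← zpow_natCast, ← zpow_natCast u n, ← zpow_mul, ← zpow_mul, ← zpow_add₀ hu,
      ← Nat.gcd_eq_gcd_ab, hmn.gcd_eq_one, Nat.cast_one, zpow_one]
  rw [bezout]
  exact mul_mem (zpow_mem hm _) (zpow_mem hn _)

namespace Redei

variable {F : Type*} [Field F]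

theorem irreducible_X_sq_sub_C {a : F} (ha : ¬IsSquare a) : Irreducible (X ^ 2 - C a) :=
  X_pow_sub_C_irreducible_of_prime Nat.prime_two fun b hb => ha ⟨b, by rw [← hb, sq]⟩

theorem root_sq (a : F) : root (X ^ 2 - C a) ^ 2 = of _ a := by
  have h := mk_self (f := X ^ 2 - C a)
  rwa [map_sub, map_pow, mk_X, mk_C, sub_eq_zero] at h

section Coordinates

variable (a : F)

/-- The coordinates of an element of `F[√a]` in the basis `1, √a`. -/
noncomputable def coord (i : ℕ) (z : AdjoinRoot (X ^ 2 - C a)) : F :=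
  (modByMonicHom (monic_X_pow_sub_C a two_ne_zero) z).coeff i

theorem redeiFun_eq_coord_div_coord (n : ℕ) (x : F) :
    redeiFun a n x = coord a 0 ((of _ x + root _) ^ n) / coord a 1 ((of _ x + root _) ^ n) := by
  simp only [redeiFun, coord, ← mk_C, ← mk_X, ← map_add, ← map_pow, modByMonicHom_mk]

theorem modByMonicHom_of_add_of_mul_root (g h : F) :
    modByMonicHom (monic_X_pow_sub_C a two_ne_zero) (of _ g + of _ h * root _) = C g + C h * X := by
  rw [← mk_C, ← mk_C, ← mk_X, ← map_mul, ← map_add, modByMonicHom_mk,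
    modByMonic_eq_self_iff (monic_X_pow_sub_C a two_ne_zero), degree_X_pow_sub_C two_pos]
  compute_degree!

@[simp]
theorem coord_zero_of_add_of_mul_root (g h : F) : coord a 0 (of _ g + of _ h * root _) = g := by
  simp [coord, modByMonicHom_of_add_of_mul_root]

@[simp]
theorem coord_one_of_add_of_mul_root (g h : F) : coord a 1 (of _ g + of _ h * root _) = h := by
  simp [coord, modByMonicHom_of_add_of_mul_root]

theorem of_coord_add_of_coord_mul_root (z : AdjoinRoot (X ^ 2 - C a)) :
    of _ (coord a 0 z) + of _ (coord a 1 z) * root _ = z := by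
  have hQ := monic_X_pow_sub_C a two_ne_zero
  obtain ⟨f, rfl⟩ := mk_surjective z
  have hr : (f %ₘ (X ^ 2 - C a)).degree ≤ 1 := by
    have := degree_modByMonic_lt f hQ
    rw [degree_X_pow_sub_C two_pos] at this
    exact Order.le_of_lt_succ this
  have hmk : mk (X ^ 2 - C a) (f %ₘ (X ^ 2 - C a)) = mk _ f := by
    simpa only [modByMonicHom_mk] using mk_leftInverse hQ (mk _ f)
  simp only [coord, modByMonicHom_mk]
  conv_rhs => rw [← hmk, eq_X_add_C_of_degree_le_one hr]
  simp only [map_add, map_mul, mk_C, mk_X]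
  ring

theorem pow_eq_of_mul_redeiFun_add_root {n : ℕ} {x : F}
    (hH : coord a 1 ((of _ x + root (X ^ 2 - C a)) ^ n) ≠ 0) :
    (of _ x + root (X ^ 2 - C a)) ^ n =
      of _ (coord a 1 ((of _ x + root _) ^ n)) * (of _ (redeiFun a n x) + root _) := by
  conv_lhs => rw [← of_coord_add_of_coord_mul_root a ((of _ x + root _) ^ n)]
  rw [redeiFun_eq_coord_div_coord, mul_add, ← map_mul, mul_div_cancel₀ _ hH, mul_comm]

theorem redeiFun_eq_of_pow_eq {n : ℕ} {x y c : F} (hc : c ≠ 0)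
    (h : (of _ x + root (X ^ 2 - C a)) ^ n = of _ c * (of _ y + root _)) :
    redeiFun a n x = y := by
  have hcoord : of _ c * (of _ y + root (X ^ 2 - C a)) = of _ (y * c) + of _ c * root _ := by
    rw [map_mul]; ring
  rw [redeiFun_eq_coord_div_coord, h, hcoord, coord_zero_of_add_of_mul_root,
    coord_one_of_add_of_mul_root, mul_div_cancel_right₀ _ hc]

end Coordinates

section FiniteField

variable [Fintype F] {a : F}

theorem root_pow_card (hF : ringChar F ≠ 2) (ha : ¬IsSquare a) :
    root (X ^ 2 - C a) ^ Fintype.card F = -root _ := by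
  have ha0 : a ≠ 0 := by rintro rfl; exact ha .zero
  have euler : a ^ (Fintype.card F / 2) = -1 :=
    (FiniteField.pow_dichotomy hF ha0).resolve_left (mt (FiniteField.isSquare_iff hF ha0).mpr ha)
  have hodd : Odd (Fintype.card F) := Nat.odd_iff.mpr (FiniteField.odd_card_of_char_ne_two hF)
  rw [← Nat.two_mul_div_two_add_one_of_odd hodd, pow_add, pow_one, pow_mul, root_sq, ← map_pow,
    euler, map_neg, map_one, neg_one_mul]

theorem of_add_of_mul_root_pow_card (hF : ringChar F ≠ 2) (ha : ¬IsSquare a) (x y : F) :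
    (of _ x + of _ y * root (X ^ 2 - C a)) ^ Fintype.card F = of _ x - of _ y * root _ := by
  rw [← FiniteField.frobeniusAlgHom_apply F, ← AdjoinRoot.algebraMap_eq, map_add, map_mul,
    AlgHom.commutes, AlgHom.commutes, FiniteField.frobeniusAlgHom_apply, root_pow_card hF ha]
  ring

theorem of_add_root_pow_card_add_one (hF : ringChar F ≠ 2) (ha : ¬IsSquare a) (x : F) :
    (of _ x + root (X ^ 2 - C a)) ^ (Fintype.card F + 1) = of _ (x ^ 2 - a) := by
  have frob := of_add_of_mul_root_pow_card hF ha x 1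
  rw [map_one, one_mul] at frob
  rw [pow_succ _ (Fintype.card F), frob, map_sub, map_pow, ← root_sq]
  ring

theorem coord_one_pow_ne_zero (hF : ringChar F ≠ 2) (ha : ¬IsSquare a) {n : ℕ}
    (hn : n.Coprime (Fintype.card F + 1)) (x : F) :
    coord a 1 ((of _ x + root (X ^ 2 - C a)) ^ n) ≠ 0 := by
  have := Fact.mk (irreducible_X_sq_sub_C ha)
  intro hH
  set u := of _ x + root (X ^ 2 - C a)
  have hun : u ^ n ∈ (of (X ^ 2 - C a)).fieldRange := by
    refine ⟨coord a 0 (u ^ n), ?_⟩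
    conv_rhs => rw [← of_coord_add_of_coord_mul_root a (u ^ n), hH, map_zero, zero_mul, add_zero]
  have hunorm : u ^ (Fintype.card F + 1) ∈ (of (X ^ 2 - C a)).fieldRange :=
    ⟨x ^ 2 - a, (of_add_root_pow_card_add_one hF ha x).symm⟩
  obtain ⟨g, hg⟩ := Subfield.mem_of_pow_mem_of_coprime _ hn hun hunorm
  have h0 := coord_one_of_add_of_mul_root a g 0
  have h1 := coord_one_of_add_of_mul_root a x 1
  rw [map_zero, zero_mul, add_zero, hg] at h0
  rw [map_one, one_mul, h0] at h1
  exact zero_ne_one h1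

theorem redeiFun_redeiFun_of_mul_modEq (hF : ringChar F ≠ 2) (ha : ¬IsSquare a) {n m : ℕ}
    (hn : n.Coprime (Fintype.card F + 1)) (hnm : n * m ≡ 1 [MOD Fintype.card F + 1]) (x : F) :
    redeiFun a m (redeiFun a n x) = x := by
  have := Fact.mk (irreducible_X_sq_sub_C ha)
  set u := of _ x + root (X ^ 2 - C a)
  set H := coord a 1 (u ^ n)
  have hH : H ≠ 0 := coord_one_pow_ne_zero hF ha hn x
  have hN : x ^ 2 - a ≠ 0 := fun h => ha ⟨x, by linear_combination -h⟩
  obtain ⟨k, hk⟩ : ∃ k, n * m = (Fintype.card F + 1) * k + 1 := by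
    have hmod : n * m % (Fintype.card F + 1) = 1 := by
      rwa [Nat.ModEq, Nat.one_mod_eq_one.mpr (by simp [Fintype.card_ne_zero])] at hnm
    exact ⟨_, hmod ▸ (Nat.div_add_mod _ _).symm⟩
  refine redeiFun_eq_of_pow_eq a (c := (x ^ 2 - a) ^ k / H ^ m)
    (div_ne_zero (pow_ne_zero _ hN) (pow_ne_zero _ hH)) ?_
  refine mul_left_cancel₀ (pow_ne_zero m ((_root_.map_ne_zero (of _)).mpr hH)) ?_
  calc of _ H ^ m * (of _ (redeiFun a n x) + root _) ^ m = u ^ (n * m) := by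
        rw [pow_mul, pow_eq_of_mul_redeiFun_add_root a hH, mul_pow]
    _ = of _ ((x ^ 2 - a) ^ k) * u := by
        rw [hk, pow_succ u, pow_mul, of_add_root_pow_card_add_one hF ha, map_pow]
    _ = of _ H ^ m * (of _ ((x ^ 2 - a) ^ k / H ^ m) * u) := by
        rw [← mul_assoc, ← map_pow, ← map_mul, mul_div_cancel₀ _ (pow_ne_zero _ hH)]

end FiniteField

end Redei

theorem stmt_13_general {F : Type*} [Field F] [Fintype F] (q n m : ℕ) (a : F)
    (hq : Fintype.card F = q) (hodd : Odd q) (hns : ¬ IsSquare a)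
    (hcop : Nat.Coprime n (q + 1))
    (hnm : n * m ≡ 1 [MOD q + 1]) :
    Function.Bijective (redeiFun a n : F → F) ∧
      ∀ x : F, redeiFun a m (redeiFun a n x) = x := by
  subst hq
  have hF : ringChar F ≠ 2 := fun h2 =>
    Nat.not_odd_iff_even.mpr (Nat.even_iff.mpr (FiniteField.even_card_of_char_two h2)) hodd
  have hinv : Function.LeftInverse (redeiFun a m) (redeiFun a n) :=
    Redei.redeiFun_redeiFun_of_mul_modEq hF hns hcop hnm
  exact ⟨Finite.injective_iff_bijective.mp hinv.injective, hinv⟩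

theorem stmt_13 {F : Type*} [Field F] [Fintype F] (q n m : ℕ) (a : F)
    (hq : Fintype.card F = q) (hodd : Odd q) (ha : a ≠ 0) (hns : ¬ IsSquare a)
    (hn : 0 < n) (hm : 0 < m) (hcop : Nat.Coprime n (q + 1))
    (hnm : n * m ≡ 1 [MOD q + 1]) :
    Function.Bijective (redeiFun a n : F → F) ∧
      ∀ x : F, redeiFun a m (redeiFun a n x) = x :=
  stmt_13_general q n m a hq hodd hns hcop hnm
end

section
/- Let q be an odd prime power, a a non-square in F_q^*, gcd(n, q+1) = 1, and j a positive integer. The Rédei permutation R_n(·, a) of F_q has a cycle of length j if and only if there exists a divisor s of q+1 such that j is the multiplicative order of n modulo s. -/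
open Polynomial Function

theorem Function.minimalPeriod_eq_orderOf_natCast_of_semiconj {α M : Type*} [Monoid M]
    {f : α → α} {ψ : α → M} {n : ℕ} (hψ : Injective ψ) (hf : Semiconj ψ f (· ^ n)) {x : α}
    (hx : IsOfFinOrder (ψ x)) :
    minimalPeriod f x = orderOf (n : ZMod (orderOf (ψ x))) := by
  rw [orderOf, minimalPeriod_eq_minimalPeriod_iff]
  intro k
  calc IsPeriodicPt f k x ↔ ψ x ^ n ^ k = ψ x ^ 1 := by
        rw [IsPeriodicPt, IsFixedPt, ← hψ.eq_iff, (hf.iterate_right k).eq, pow_iterate, pow_one]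
    _ ↔ n ^ k ≡ 1 [MOD orderOf (ψ x)] := hx.pow_eq_pow_iff_modEq
    _ ↔ IsPeriodicPt ((n : ZMod (orderOf (ψ x))) * ·) k 1 := by
        rw [isPeriodicPt_mul_iff_pow_eq_one, ← ZMod.natCast_eq_natCast_iff]
        push_cast
        rfl

section Redei

variable {F : Type*} [Field F]

noncomputable def redeiRem (a : F) (n : ℕ) (y : F) : F[X] :=
  (C y + X) ^ n %ₘ (X ^ 2 - C a)

theorem redeiFun_eq_coeff_div (a : F) (n : ℕ) (y : F) :
    redeiFun a n y = (redeiRem a n y).coeff 0 / (redeiRem a n y).coeff 1 :=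
  rfl

theorem algebraMap_add_pow_eq_redeiRem {R : Type*} [CommRing R] [Algebra F R] {a : F} {θ : R}
    (hθ : θ ^ 2 = algebraMap F R a) (n : ℕ) (y : F) :
    (algebraMap F R y + θ) ^ n = algebraMap F R ((redeiRem a n y).coeff 0) +
      algebraMap F R ((redeiRem a n y).coeff 1) * θ := by
  have hroot : aeval θ (X ^ 2 - C a) = 0 := by simp [hθ]
  have hdeg : (redeiRem a n y).natDegree ≤ 1 := by
    have := natDegree_modByMonic_lt ((C y + X) ^ n) (monic_X_pow_sub_C a two_ne_zero)
      fun h => by simpa using congrArg natDegree h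
    rw [natDegree_X_pow_sub_C] at this
    exact Nat.le_of_lt_succ this
  have h := aeval_modByMonic_eq_self_of_root (p := (C y + X) ^ n) hroot
  rw [← redeiRem, eq_X_add_C_of_natDegree_le_one hdeg] at h
  simp only [map_add, map_mul, map_pow, aeval_C, aeval_X] at h
  rw [← h]
  ring

end Redei

section Cayley

variable {F L : Type*} [Field F] [Field L] [Algebra F L] {a : F} {θ : L}

noncomputable def cayley (θ : L) (y : F) : L :=
  (algebraMap F L y + θ) / (algebraMap F L y - θ)

theorem two_ne_zero_of_ringChar_ne_two (h2 : ringChar F ≠ 2) : (2 : L) ≠ 0 :=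
  map_ofNat (algebraMap F L) 2 ▸ (_root_.map_ne_zero _).mpr (Ring.two_ne_zero h2)

theorem algebraMap_sub_ne_zero (hθ : θ ^ 2 = algebraMap F L a) (hns : ¬IsSquare a) (y : F) :
    algebraMap F L y - θ ≠ 0 := by
  rw [sub_ne_zero]
  intro h
  exact hns ⟨y, (algebraMap F L).injective (by rw [← hθ, ← h, map_mul, sq])⟩

theorem algebraMap_add_ne_zero (hθ : θ ^ 2 = algebraMap F L a) (hns : ¬IsSquare a) (y : F) :
    algebraMap F L y + θ ≠ 0 := by
  simpa using algebraMap_sub_ne_zero (θ := -θ) (by rw [neg_sq, hθ]) hns y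

theorem ne_zero_of_sq_eq_algebraMap (hθ : θ ^ 2 = algebraMap F L a) (hns : ¬IsSquare a) :
    θ ≠ 0 := by
  simpa using algebraMap_sub_ne_zero hθ hns 0

theorem cayley_ne_one (hθ : θ ^ 2 = algebraMap F L a) (hns : ¬IsSquare a)
    (h2 : ringChar F ≠ 2) (y : F) : cayley θ y ≠ 1 := by
  rw [cayley, Ne, div_eq_one_iff_eq (algebraMap_sub_ne_zero hθ hns y)]
  intro h
  exact mul_ne_zero (two_ne_zero_of_ringChar_ne_two h2) (ne_zero_of_sq_eq_algebraMap hθ hns)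
    (by linear_combination h)

theorem cayley_injective (hθ : θ ^ 2 = algebraMap F L a) (hns : ¬IsSquare a)
    (h2 : ringChar F ≠ 2) : Injective (cayley θ : F → L) := by
  intro y z h
  rw [cayley, cayley, div_eq_div_iff (algebraMap_sub_ne_zero hθ hns y)
    (algebraMap_sub_ne_zero hθ hns z)] at h
  have h' : 2 * θ * (algebraMap F L z - algebraMap F L y) = 0 := by linear_combination h
  rcases mul_eq_zero.mp h' with h0 | h0
  · exact absurd h0 (mul_ne_zero (two_ne_zero_of_ringChar_ne_two h2)
      (ne_zero_of_sq_eq_algebraMap hθ hns))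
  · exact (algebraMap F L).injective (sub_eq_zero.mp h0).symm

end Cayley

section FiniteField

variable {F L : Type*} [Field F] [Fintype F] [Field L] [Algebra F L] {a : F} {θ : L}

theorem pow_card_div_two_eq_neg_one (h2 : ringChar F ≠ 2) (hns : ¬IsSquare a) :
    a ^ (Fintype.card F / 2) = -1 := by
  have ha : a ≠ 0 := by
    rintro rfl
    exact hns IsSquare.zero
  exact (FiniteField.pow_dichotomy h2 ha).resolve_left
    fun h => hns ((FiniteField.isSquare_iff h2 ha).mpr h)

theorem pow_card_eq_neg_of_sq_eq (hθ : θ ^ 2 = algebraMap F L a) (hns : ¬IsSquare a)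
    (h2 : ringChar F ≠ 2) : θ ^ Fintype.card F = -θ := by
  have hq : Fintype.card F = 2 * (Fintype.card F / 2) + 1 := by
    have := FiniteField.odd_card_of_char_ne_two h2
    omega
  rw [hq, pow_succ, pow_mul, hθ, ← map_pow, pow_card_div_two_eq_neg_one h2 hns, map_neg, map_one,
    neg_one_mul]

theorem algebraMap_add_pow_card (hθ : θ ^ 2 = algebraMap F L a) (hns : ¬IsSquare a)
    (h2 : ringChar F ≠ 2) (y : F) :
    (algebraMap F L y + θ) ^ Fintype.card F = algebraMap F L y - θ := by
  have h := map_add (FiniteField.frobeniusAlgHom F L) (algebraMap F L y) θ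
  rw [AlgHom.commutes, FiniteField.frobeniusAlgHom_apply, FiniteField.frobeniusAlgHom_apply,
    pow_card_eq_neg_of_sq_eq hθ hns h2] at h
  rw [h, sub_eq_add_neg]

theorem cayley_pow_card_add_one (hθ : θ ^ 2 = algebraMap F L a) (hns : ¬IsSquare a)
    (h2 : ringChar F ≠ 2) (y : F) : cayley θ y ^ (Fintype.card F + 1) = 1 := by
  have hconj : (algebraMap F L y - θ) ^ Fintype.card F = algebraMap F L y + θ := by
    simpa [sub_eq_add_neg] using algebraMap_add_pow_card (θ := -θ) (by rw [neg_sq, hθ]) hns h2 y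
  rw [cayley, div_pow, pow_succ, pow_succ, algebraMap_add_pow_card hθ hns h2, hconj, mul_comm,
    div_self (mul_ne_zero (algebraMap_add_ne_zero hθ hns y) (algebraMap_sub_ne_zero hθ hns y))]

theorem range_cayley (hθ : θ ^ 2 = algebraMap F L a) (hns : ¬IsSquare a) (h2 : ringChar F ≠ 2) :
    Set.range (cayley θ : F → L) = {u | u ^ (Fintype.card F + 1) = 1 ∧ u ≠ 1} := by
  classical
  set T := (nthRootsFinset (Fintype.card F + 1) (1 : L)).erase 1
  have hT : (T : Set L) = {u | u ^ (Fintype.card F + 1) = 1 ∧ u ≠ 1} := by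
    ext u
    simp [T, and_comm]
  have hsub : Finset.univ.image (cayley θ : F → L) ⊆ T := by
    simp only [Finset.subset_iff, Finset.mem_image, Finset.mem_univ, true_and,
      forall_exists_index, forall_apply_eq_imp_iff]
    intro y
    simp [T, mem_nthRootsFinset, cayley_ne_one hθ hns h2, cayley_pow_card_add_one hθ hns h2]
  have hcard : T.card ≤ (Finset.univ.image (cayley θ : F → L)).card := by
    rw [Finset.card_image_of_injective _ (cayley_injective hθ hns h2), Finset.card_univ,
      Finset.card_erase_of_mem (by simp [mem_nthRootsFinset])]
    have := (Multiset.toFinset_card_le _).trans (card_nthRoots (Fintype.card F + 1) (1 : L))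
    rw [← nthRootsFinset_def] at this
    omega
  rw [← hT, ← Finset.eq_of_subset_of_card_le hsub hcard]
  simp

theorem cayley_redeiFun (hθ : θ ^ 2 = algebraMap F L a) (hns : ¬IsSquare a)
    (h2 : ringChar F ≠ 2) {n : ℕ} (hcop : n.Coprime (Fintype.card F + 1)) (y : F) :
    cayley θ (redeiFun a n y) = cayley θ y ^ n := by
  set G := algebraMap F L ((redeiRem a n y).coeff 0)
  set H := algebraMap F L ((redeiRem a n y).coeff 1)
  have hplus : (algebraMap F L y + θ) ^ n = G + H * θ := algebraMap_add_pow_eq_redeiRem hθ n y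
  have hminus : (algebraMap F L y - θ) ^ n = G - H * θ := by
    simpa [sub_eq_add_neg] using algebraMap_add_pow_eq_redeiRem (θ := -θ) (by rw [neg_sq, hθ]) n y
  have hminus0 : G - H * θ ≠ 0 := hminus ▸ pow_ne_zero n (algebraMap_sub_ne_zero hθ hns y)
  have hH : H ≠ 0 := by
    intro hH
    have hn : cayley θ y ^ n = 1 := by
      rw [hH, zero_mul, sub_zero] at hminus0
      rw [cayley, div_pow, hplus, hminus, hH, zero_mul, add_zero, sub_zero, div_self hminus0]
    have h1 := pow_gcd_eq_one.mpr ⟨hn, cayley_pow_card_add_one hθ hns h2 y⟩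
    rw [Nat.Coprime.gcd_eq_one hcop, pow_one] at h1
    exact cayley_ne_one hθ hns h2 y h1
  have hlhs : cayley θ (redeiFun a n y) = (G / H + θ) / (G / H - θ) := by
    rw [redeiFun_eq_coeff_div, cayley, map_div₀]
  rw [hlhs, div_add' _ _ _ hH, div_sub' hH,
    div_div_div_cancel_right₀ hH, cayley, div_pow, hplus, hminus, mul_comm θ H]

theorem minimalPeriod_redeiFun (hθ : θ ^ 2 = algebraMap F L a) (hns : ¬IsSquare a)
    (h2 : ringChar F ≠ 2) {n : ℕ} (hcop : n.Coprime (Fintype.card F + 1)) (y : F) :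
    minimalPeriod (redeiFun a n) y = orderOf (n : ZMod (orderOf (cayley θ y))) :=
  minimalPeriod_eq_orderOf_natCast_of_semiconj (cayley_injective hθ hns h2)
    (cayley_redeiFun hθ hns h2 hcop)
    (isOfFinOrder_iff_pow_eq_one.mpr ⟨_, Nat.succ_pos _, cayley_pow_card_add_one hθ hns h2 y⟩)

theorem natCast_ne_zero_of_dvd_card_add_one {s : ℕ} (hs : s ∣ Fintype.card F + 1) :
    (s : F) ≠ 0 := by
  obtain ⟨t, ht⟩ := hs
  intro h
  have h1 : ((Fintype.card F + 1 : ℕ) : F) = 0 := by rw [ht, Nat.cast_mul, h, zero_mul]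
  simp at h1

theorem exists_orderOf_cayley_eq [IsAlgClosed L] (hθ : θ ^ 2 = algebraMap F L a)
    (hns : ¬IsSquare a) (h2 : ringChar F ≠ 2) {t : ℕ} (ht : t ∣ Fintype.card F + 1) (ht1 : 1 < t) :
    ∃ y : F, orderOf (cayley θ y) = t := by
  have : NeZero (t : L) :=
    ⟨map_natCast (algebraMap F L) t ▸
      (_root_.map_ne_zero _).mpr (natCast_ne_zero_of_dvd_card_add_one ht)⟩
  obtain ⟨ζ, hζ⟩ := HasEnoughRootsOfUnity.exists_primitiveRoot L t
  obtain ⟨y, rfl⟩ : ζ ∈ Set.range (cayley θ : F → L) := by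
    rw [range_cayley hθ hns h2]
    exact ⟨(hζ.pow_eq_one_iff_dvd _).mpr ht, hζ.ne_one ht1⟩
  exact ⟨y, hζ.eq_orderOf.symm⟩

end FiniteField

theorem stmt_15_general {F : Type*} [Field F] [Fintype F] (q n j : ℕ) (a : F)
    (hq : Fintype.card F = q) (hodd : Odd q) (hns : ¬ IsSquare a)
    (hcop : Nat.Coprime n (q + 1)) :
    (∃ x : F, Function.minimalPeriod (redeiFun a n) x = j) ↔
      ∃ s, s ∣ q + 1 ∧ orderOf (n : ZMod s) = j := by
  subst hq
  have h2 : ringChar F ≠ 2 := fun h => by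
    have := FiniteField.even_card_of_char_two h
    grind
  obtain ⟨θ, hθ⟩ := IsAlgClosed.exists_pow_nat_eq (algebraMap F (AlgebraicClosure F) a) two_pos
  have hperiod := minimalPeriod_redeiFun hθ hns h2 hcop
  constructor
  · rintro ⟨x, rfl⟩
    exact ⟨_, orderOf_dvd_of_pow_eq_one (cayley_pow_card_add_one hθ hns h2 x), (hperiod x).symm⟩
  · rintro ⟨s, hs, rfl⟩
    have h2dvd : 2 ∣ Fintype.card F + 1 := even_iff_two_dvd.mp hodd.add_one
    have hn : Odd n := (hcop.coprime_dvd_right h2dvd).odd_of_right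
    obtain ⟨t, ht, ht1, hts⟩ :
        ∃ t, t ∣ Fintype.card F + 1 ∧ 1 < t ∧ orderOf (n : ZMod t) = orderOf (n : ZMod s) := by
      rcases eq_or_ne s 1 with rfl | hs1
      · refine ⟨2, h2dvd, one_lt_two, ?_⟩
        rw [ZMod.natCast_eq_one_iff_odd.mpr hn, orderOf_one, eq_comm, orderOf_eq_one_iff]
        exact Subsingleton.elim _ _
      · exact ⟨s, hs, by have := Nat.pos_of_dvd_of_pos hs (Nat.succ_pos _); omega, rfl⟩
    obtain ⟨x, hx⟩ := exists_orderOf_cayley_eq hθ hns h2 ht ht1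
    exact ⟨x, by rw [hperiod, hx, hts]⟩

theorem stmt_15 {F : Type*} [Field F] [Fintype F] (q n j : ℕ) (a : F)
    (hq : Fintype.card F = q) (hodd : Odd q) (ha : a ≠ 0) (hns : ¬ IsSquare a)
    (hn : 0 < n) (hcop : Nat.Coprime n (q + 1)) (hj : 0 < j) :
    (∃ x : F, Function.minimalPeriod (redeiFun a n) x = j) ↔
      ∃ s, s ∣ q + 1 ∧ orderOf (n : ZMod s) = j :=
  stmt_15_general q n j a hq hodd hns hcop
end

section
/- Let q be an odd prime power, a a non-square in F_q^*, and gcd(n, q+1) = 1. For j ≥ 1, let N_j denote the number of cycles of length j of the Rédei permutation R_n(·, a) of F_q. Then j·N_j + Σ_{i | j, i < j} i·N_i + 1 = gcd(n^j − 1, q + 1). -/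
universe u

open Polynomial Function

theorem FiniteField.natCard_pow_eq_one (L : Type*) [Field L] [Finite L] {d : ℕ} (hd : d ≠ 0) :
    Nat.card {z : L // z ^ d = 1} = (Nat.card L - 1).gcd d := by
  have : NeZero d := ⟨hd⟩
  calc Nat.card {z : L // z ^ d = 1}
      = Nat.card (rootsOfUnity d L) :=
        (Nat.card_congr ((rootsOfUnityEquivNthRoots L d).trans
          (Equiv.subtypeEquivRight fun _ => mem_nthRoots (NeZero.pos d)))).symm
    _ = (Nat.card L - 1).gcd d := by
      rw [rootsOfUnity_eq_ker, IsCyclic.card_powMonoidHom_ker, Nat.card_units]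

theorem Nat.card_subtype_and_ne_add_one {α : Type*} [Finite α] {p : α → Prop} {a : α}
    (ha : p a) : Nat.card {x // p x ∧ x ≠ a} + 1 = Nat.card {x // p x} :=
  Set.ncard_sdiff_singleton_add_one (s := {x | p x}) ha (Set.toFinite _)

theorem Function.natCard_isPeriodicPt_eq_sum_divisors {α : Type*} [Fintype α] (f : α → α)
    {j : ℕ} (hj : j ≠ 0) :
    Nat.card {x // IsPeriodicPt f j x} =
      ∑ i ∈ j.divisors, Nat.card {x // minimalPeriod f x = i} := by
  classical
  simp only [Nat.card_eq_fintype_card, Fintype.card_subtype]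
  rw [Finset.card_eq_sum_card_fiberwise fun x hx =>
    Nat.mem_divisors.mpr ⟨(Finset.mem_filter.mp hx).2.minimalPeriod_dvd, hj⟩]
  refine Finset.sum_congr rfl fun i hi => congrArg Finset.card ?_
  ext x
  simp only [Finset.mem_filter, Finset.mem_univ, true_and, and_iff_right_iff_imp]
  rintro rfl
  exact isPeriodicPt_iff_minimalPeriod_dvd.mpr (Nat.dvd_of_mem_divisors hi)

theorem Nat.add_one_dvd_sq_sub_one (q : ℕ) : q + 1 ∣ q ^ 2 - 1 :=
  ⟨q - 1, by simpa using Nat.sq_sub_sq q 1⟩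

theorem pow_eq_self_iff_pow_pred_eq_one {M₀ : Type*} [MonoidWithZero M₀]
    [IsRightCancelMulZero M₀] {z : M₀} (hz : z ≠ 0) {k : ℕ} (hk : k ≠ 0) :
    z ^ k = z ↔ z ^ (k - 1) = 1 := by
  conv_lhs => rw [← Nat.sub_add_cancel (Nat.one_le_iff_ne_zero.mpr hk), pow_succ]
  exact mul_eq_right₀ hz

theorem FiniteField.natCard_pow_add_one_eq_one_and_ne_one {L : Type*} [Field L] [Finite L]
    {q : ℕ} (hL : Nat.card L = q ^ 2) : Nat.card {z : L // z ^ (q + 1) = 1 ∧ z ≠ 1} = q := by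
  have h := Nat.card_subtype_and_ne_add_one (p := fun z : L => z ^ (q + 1) = 1) (one_pow _)
  rw [FiniteField.natCard_pow_eq_one L q.succ_ne_zero, hL,
    Nat.gcd_eq_right (Nat.add_one_dvd_sq_sub_one q)] at h
  omega

section FiniteField

variable {F K : Type*} [Field F] [Fintype F] [Field K] [Algebra F K]

local notation "q" => Fintype.card F

theorem FiniteField.ringChar_ne_two_of_odd_card (hodd : Odd q) : ringChar F ≠ 2 := fun h => by
  simp [Nat.odd_iff, FiniteField.even_card_of_char_two h] at hodd

theorem FiniteField.two_ne_zero_of_odd_card (hodd : Odd q) : (2 : K) ≠ 0 := by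
  rw [← map_ofNat (algebraMap F K) 2]
  exact (_root_.map_ne_zero _).mpr (Ring.two_ne_zero (ringChar_ne_two_of_odd_card hodd))

theorem FiniteField.pow_card_eq_neg_of_sq_eq {a : F} {s : K} (hodd : Odd q)
    (hs : s ^ 2 = algebraMap F K a) (hns : ¬IsSquare a) : s ^ q = -s := by
  have hchar := FiniteField.ringChar_ne_two_of_odd_card hodd
  have ha : a ≠ 0 := by rintro rfl; exact hns ⟨0, by simp⟩
  have heuler : a ^ (q / 2) = -1 := (FiniteField.pow_dichotomy hchar ha).resolve_left
    ((FiniteField.isSquare_iff hchar ha).not.mp hns)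
  calc s ^ q = (s ^ 2) ^ (q / 2) * s := by
        rw [← pow_mul, ← pow_succ, Nat.two_mul_odd_div_two (Nat.odd_iff.mp hodd),
          Nat.sub_add_cancel hodd.pos]
    _ = -s := by rw [hs, ← map_pow, heuler, map_neg, map_one, neg_one_mul]

end FiniteField

theorem FiniteField.exists_extension_sq_eq {F : Type u} [Field F] [Fintype F] {a : F}
    (hns : ¬IsSquare a) :
    ∃ (K : Type u) (_ : Field K) (_ : Algebra F K) (_ : Finite K) (s : K),
      Nat.card K = Fintype.card F ^ 2 ∧ s ^ 2 = algebraMap F K a := by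
  have hmonic : (X ^ 2 - C a).Monic := monic_X_pow_sub_C a two_ne_zero
  have : Fact (Irreducible (X ^ 2 - C a)) :=
    ⟨X_pow_sub_C_irreducible_of_prime Nat.prime_two fun b hb => hns ⟨b, by rw [← hb, sq]⟩⟩
  have := hmonic.finite_adjoinRoot
  refine ⟨AdjoinRoot (X ^ 2 - C a), inferInstance, inferInstance, Module.finite_of_finite F,
    AdjoinRoot.root _, ?_, ?_⟩
  · rw [Module.natCard_eq_pow_finrank (K := F), (AdjoinRoot.powerBasis' hmonic).finrank,
      AdjoinRoot.powerBasis'_dim, natDegree_X_pow_sub_C, Nat.card_eq_fintype_card]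
  · have h := AdjoinRoot.eval₂_root (X ^ 2 - C a)
    rwa [eval₂_sub, eval₂_X_pow, eval₂_C, sub_eq_zero] at h

namespace Redei

section Cayley

variable {F K : Type*} [Field F] [Field K] [Algebra F K] {a : F} {s : K}

noncomputable def G (a : F) (n : ℕ) (x : F) : F := ((C x + X) ^ n %ₘ (X ^ 2 - C a)).coeff 0

noncomputable def H (a : F) (n : ℕ) (x : F) : F := ((C x + X) ^ n %ₘ (X ^ 2 - C a)).coeff 1

theorem redeiFun_eq_G_div_H (a : F) (n : ℕ) (x : F) : redeiFun a n x = G a n x / H a n x := rfl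

theorem add_pow_eq_G_add_H_mul (hs : s ^ 2 = algebraMap F K a) (n : ℕ) (x : F) :
    (algebraMap F K x + s) ^ n = algebraMap F K (G a n x) + algebraMap F K (H a n x) * s := by
  set r := (C x + X) ^ n %ₘ (X ^ 2 - C a)
  have hdeg : r.degree ≤ 1 := by
    have := degree_modByMonic_lt ((C x + X) ^ n) (monic_X_pow_sub_C a two_ne_zero)
    rw [degree_X_pow_sub_C two_pos] at this
    exact Order.le_of_lt_succ this
  have hroot : aeval s (X ^ 2 - C a) = 0 := by simp [hs]
  calc (algebraMap F K x + s) ^ n = aeval s r := by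
        rw [aeval_modByMonic_eq_self_of_root hroot]
        simp
    _ = _ := by
        rw [eq_X_add_C_of_degree_le_one hdeg]
        simp [G, H, r, add_comm]

theorem algebraMap_ne_of_sq_eq (hs : s ^ 2 = algebraMap F K a) (hns : ¬IsSquare a) (x : F) :
    algebraMap F K x ≠ s := by
  rintro rfl
  exact hns ⟨x, (algebraMap F K).injective (by rw [← hs, map_mul, sq])⟩

theorem algebraMap_add_ne_zero (hs : s ^ 2 = algebraMap F K a) (hns : ¬IsSquare a) (x : F) :
    algebraMap F K x + s ≠ 0 := fun h =>
  algebraMap_ne_of_sq_eq hs hns (-x) (by rw [map_neg]; linear_combination -h)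

theorem algebraMap_sub_ne_zero (hs : s ^ 2 = algebraMap F K a) (hns : ¬IsSquare a) (x : F) :
    algebraMap F K x - s ≠ 0 :=
  sub_ne_zero.mpr (algebraMap_ne_of_sq_eq hs hns x)

theorem two_mul_ne_zero_of_sq_eq (h2 : (2 : K) ≠ 0) (hs : s ^ 2 = algebraMap F K a)
    (hns : ¬IsSquare a) : 2 * s ≠ 0 :=
  mul_ne_zero h2 (by simpa [eq_comm] using algebraMap_ne_of_sq_eq hs hns 0)

noncomputable def cayley (s : K) (x : F) : K := (algebraMap F K x + s) / (algebraMap F K x - s)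

theorem cayley_ne_zero (hs : s ^ 2 = algebraMap F K a) (hns : ¬IsSquare a) (x : F) :
    cayley s x ≠ 0 :=
  div_ne_zero (algebraMap_add_ne_zero hs hns x) (algebraMap_sub_ne_zero hs hns x)

theorem cayley_injective (h2 : (2 : K) ≠ 0) (hs : s ^ 2 = algebraMap F K a)
    (hns : ¬IsSquare a) : Injective (cayley s : F → K) := by
  intro x y hxy
  rw [cayley, cayley, div_eq_div_iff (algebraMap_sub_ne_zero hs hns x)
    (algebraMap_sub_ne_zero hs hns y)] at hxy
  have h : 2 * s * (algebraMap F K y - algebraMap F K x) = 0 := by linear_combination hxy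
  rw [mul_eq_zero, or_iff_right (two_mul_ne_zero_of_sq_eq h2 hs hns), sub_eq_zero] at h
  exact ((algebraMap F K).injective h).symm

theorem cayley_ne_one (h2 : (2 : K) ≠ 0) (hs : s ^ 2 = algebraMap F K a) (hns : ¬IsSquare a)
    (x : F) : cayley s x ≠ 1 := by
  rw [cayley, Ne, div_eq_one_iff_eq (algebraMap_sub_ne_zero hs hns x)]
  intro h
  exact two_mul_ne_zero_of_sq_eq h2 hs hns (by linear_combination h)

theorem cayley_div {u v : F} (hv : v ≠ 0) :
    cayley s (u / v) =
      (algebraMap F K u + algebraMap F K v * s) / (algebraMap F K u - algebraMap F K v * s) := by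
  have hv' : algebraMap F K v ≠ 0 := (_root_.map_ne_zero _).mpr hv
  rw [cayley, map_div₀]
  field_simp

variable (σ : K →ₐ[F] K)

theorem map_cayley (hσ : σ s = -s) (x : F) : σ (cayley s x) = (cayley s x)⁻¹ := by
  simp [cayley, hσ, ← sub_eq_add_neg]

theorem sub_pow_eq_G_sub_H_mul (hσ : σ s = -s) (hs : s ^ 2 = algebraMap F K a) (n : ℕ) (x : F) :
    (algebraMap F K x - s) ^ n = algebraMap F K (G a n x) - algebraMap F K (H a n x) * s := by
  simpa [hσ, ← sub_eq_add_neg] using congrArg σ (add_pow_eq_G_add_H_mul hs n x)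

end Cayley

section FiniteField

open FiniteField

variable {F K : Type*} [Field F] [Fintype F] [Field K] [Algebra F K] {a : F} {s : K}

local notation "q" => Fintype.card F

theorem cayley_pow_card_add_one (hodd : Odd q) (hs : s ^ 2 = algebraMap F K a)
    (hns : ¬IsSquare a) (x : F) : cayley s x ^ (q + 1) = 1 := by
  have hfrob : cayley s x ^ q = (cayley s x)⁻¹ :=
    map_cayley (frobeniusAlgHom F K) (pow_card_eq_neg_of_sq_eq hodd hs hns) x
  rw [pow_succ, hfrob, inv_mul_cancel₀ (cayley_ne_zero hs hns x)]

theorem H_ne_zero (hodd : Odd q) (hs : s ^ 2 = algebraMap F K a) (hns : ¬IsSquare a) {n : ℕ}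
    (hcop : n.Coprime (q + 1)) (x : F) : H a n x ≠ 0 := by
  intro hH
  have hadd : (algebraMap F K x + s) ^ n = algebraMap F K (G a n x) := by
    simpa [hH] using add_pow_eq_G_add_H_mul hs n x
  have hsub : (algebraMap F K x - s) ^ n = algebraMap F K (G a n x) := by
    simpa [hH] using
      sub_pow_eq_G_sub_H_mul (frobeniusAlgHom F K) (pow_card_eq_neg_of_sq_eq hodd hs hns) hs n x
  have hpow : cayley s x ^ n = 1 := by
    rw [cayley, div_pow, hadd, hsub,
      div_self (hadd ▸ pow_ne_zero n (algebraMap_add_ne_zero hs hns x))]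
  exact cayley_ne_one (two_ne_zero_of_odd_card hodd) hs hns x
    ((pow_eq_one_iff_of_coprime hcop).mp ⟨hpow, cayley_pow_card_add_one hodd hs hns x⟩)

theorem cayley_redeiFun (hodd : Odd q) (hs : s ^ 2 = algebraMap F K a) (hns : ¬IsSquare a)
    {n : ℕ} (hcop : n.Coprime (q + 1)) (x : F) :
    cayley s (redeiFun a n x) = cayley s x ^ n := by
  rw [redeiFun_eq_G_div_H, cayley_div (H_ne_zero hodd hs hns hcop x), cayley, div_pow,
    add_pow_eq_G_add_H_mul hs,
    sub_pow_eq_G_sub_H_mul (frobeniusAlgHom F K) (pow_card_eq_neg_of_sq_eq hodd hs hns) hs]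

theorem isPeriodicPt_redeiFun_iff (hodd : Odd q) (hs : s ^ 2 = algebraMap F K a)
    (hns : ¬IsSquare a) {n : ℕ} (hcop : n.Coprime (q + 1)) (m : ℕ) (x : F) :
    IsPeriodicPt (redeiFun a n) m x ↔ cayley s x ^ n ^ m = cayley s x := by
  have hsemiconj : Semiconj (cayley s) (redeiFun a n) (· ^ n) := cayley_redeiFun hodd hs hns hcop
  rw [IsPeriodicPt, IsFixedPt, ← (cayley_injective (two_ne_zero_of_odd_card hodd) hs hns).eq_iff,
    (hsemiconj.iterate_right m).eq, pow_iterate]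

noncomputable def cayleyEquiv [Finite K] (hK : Nat.card K = q ^ 2) (hodd : Odd q)
    (hs : s ^ 2 = algebraMap F K a) (hns : ¬IsSquare a) :
    F ≃ {z : K // z ^ (q + 1) = 1 ∧ z ≠ 1} :=
  Equiv.ofBijective
    (fun x => ⟨cayley s x, cayley_pow_card_add_one hodd hs hns x,
      cayley_ne_one (two_ne_zero_of_odd_card hodd) hs hns x⟩)
    (Injective.bijective_of_nat_card_le
      (fun _ _ h => cayley_injective (two_ne_zero_of_odd_card hodd) hs hns (congrArg Subtype.val h))
      (by rw [natCard_pow_add_one_eq_one_and_ne_one hK, Nat.card_eq_fintype_card]))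

end FiniteField

theorem natCard_isPeriodicPt_redeiFun_add_one {F : Type u} [Field F] [Fintype F] {a : F}
    (hodd : Odd (Fintype.card F)) (hns : ¬IsSquare a) {n : ℕ} (hn : 0 < n)
    (hcop : n.Coprime (Fintype.card F + 1)) (m : ℕ) :
    Nat.card {x : F // IsPeriodicPt (redeiFun a n) m x} + 1 =
      (n ^ m - 1).gcd (Fintype.card F + 1) := by
  obtain ⟨K, _, _, _, s, hK, hs⟩ := FiniteField.exists_extension_sq_eq hns
  set q := Fintype.card F
  set g := (n ^ m - 1).gcd (q + 1)
  have hg : g ≠ 0 := (Nat.gcd_pos_of_pos_right _ q.succ_pos).ne'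
  have hroots (z : K) : ((z ^ (q + 1) = 1 ∧ z ≠ 1) ∧ z ^ n ^ m = z) ↔ z ^ g = 1 ∧ z ≠ 1 := by
    have hfix (hz : z ^ (q + 1) = 1) : z ^ n ^ m = z ↔ z ^ (n ^ m - 1) = 1 :=
      pow_eq_self_iff_pow_pred_eq_one (ne_zero_pow q.succ_ne_zero (hz ▸ one_ne_zero))
        (pow_ne_zero m hn.ne')
    rw [pow_gcd_eq_one]
    constructor
    · rintro ⟨⟨hq, hz1⟩, hz⟩
      exact ⟨⟨(hfix hq).mp hz, hq⟩, hz1⟩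
    · rintro ⟨⟨hz, hq⟩, hz1⟩
      exact ⟨⟨hq, hz1⟩, (hfix hq).mpr hz⟩
  calc Nat.card {x : F // IsPeriodicPt (redeiFun a n) m x} + 1
      = Nat.card {z : K // z ^ g = 1 ∧ z ≠ 1} + 1 := by
        congr 1
        exact Nat.card_congr <|
          ((cayleyEquiv hK hodd hs hns).subtypeEquiv fun x =>
            isPeriodicPt_redeiFun_iff hodd hs hns hcop m x).trans <|
          (Equiv.subtypeSubtypeEquivSubtypeInter _ _).trans (Equiv.subtypeEquivRight hroots)
    _ = Nat.card {z : K // z ^ g = 1} := Nat.card_subtype_and_ne_add_one (one_pow g)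
    _ = g := by
        rw [FiniteField.natCard_pow_eq_one K hg, hK,
          Nat.gcd_eq_right ((Nat.gcd_dvd_right _ _).trans (Nat.add_one_dvd_sq_sub_one q))]

end Redei

theorem stmt_16_general {F : Type*} [Field F] [Fintype F] (q n j : ℕ) (a : F)
    (hq : Fintype.card F = q) (hodd : Odd q) (hns : ¬ IsSquare a)
    (hn : 0 < n) (hcop : Nat.Coprime n (q + 1)) (hj : 0 < j)
    (N : ℕ → ℕ)
    (hN : ∀ i, i * N i =
      Nat.card {x : F // Function.minimalPeriod (redeiFun a n) x = i}) :
    j * N j + (∑ i ∈ Nat.properDivisors j, i * N i) + 1 =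
      Nat.gcd (n ^ j - 1) (q + 1) := by
  subst hq
  rw [← Redei.natCard_isPeriodicPt_redeiFun_add_one hodd hns hn hcop j,
    natCard_isPeriodicPt_eq_sum_divisors _ hj.ne', ← Nat.cons_self_properDivisors hj.ne',
    Finset.sum_cons, hN j, Finset.sum_congr rfl fun i _ => hN i]

theorem stmt_16 {F : Type*} [Field F] [Fintype F] (q n j : ℕ) (a : F)
    (hq : Fintype.card F = q) (hodd : Odd q) (ha : a ≠ 0) (hns : ¬ IsSquare a)
    (hn : 0 < n) (hcop : Nat.Coprime n (q + 1)) (hj : 0 < j)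
    (N : ℕ → ℕ)
    (hN : ∀ i, i * N i =
      Nat.card {x : F // Function.minimalPeriod (redeiFun a n) x = i}) :
    j * N j + (∑ i ∈ Nat.properDivisors j, i * N i) + 1 =
      Nat.gcd (n ^ j - 1) (q + 1) :=
  stmt_16_general q n j a hq hodd hns hn hcop hj N hN
end
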